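/- Let Q be a Markov kernel on a Polish space X, d: X×X → [0,1] a distance-like function which is contracting for Q with constant α < 1, and V: X → ℝ₊ a continuous function integrable with respect to each Q(x,·) and satisfying (QV)(x) ≤ (1/8)V(x) + K_V for all x and some K_V > 0. Then for every β > 0 and every pair x, y with d(x,y) < 1, the function d̃_β(x,y) = √(d(x,y)(1 + βV(x) + βV(y))) lifted to measures satisfies d̃_β(Q(x,·), Q(y,·))² ≤ α (1 + 2βK_V) d̃_β(x,y)². In particular, for any α₁ ∈ (α,1), choosing β small enough that α(1 + 2βK_V) ≤ α₁ gives d̃_β(Q(x,·), Q(y,·))² ≤ α₁ d̃_β(x,y)² whenever d(x,y) < 1. -/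

import Mathlib

open MeasureTheory ProbabilityTheory Filter Topology
open scoped ENNReal NNReal

noncomputable section

/-- A coupling of two measures: a measure on the product with the given marginals. -/
def IsCoupling {α β : Type*} [MeasurableSpace α] [MeasurableSpace β]
    (π : Measure (α × β)) (μ : Measure α) (ν : Measure β) : Prop :=
  π.map Prod.fst = μ ∧ π.map Prod.snd = ν

/-- The lift of a distance-like function `d` to probability measures. -/
def liftDist {α : Type*} [MeasurableSpace α] (d : α → α → ℝ) (μ ν : Measure α) : ℝ≥0∞ :=
  sInf {r : ℝ≥0∞ | ∃ π : Measure (α × α), IsCoupling π μ ν ∧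
    r = ∫⁻ p, ENNReal.ofReal (d p.1 p.2) ∂π}

/- Fix `x, y` and a coupling `π` of `Q(x,·)` and `Q(y,·)`. By Cauchy–Schwarz,
`(∫ √(d·W) dπ)² ≤ (∫ d dπ)(∫ W dπ)` for the weight `W(a,b) = 1 + βV(a) + βV(b)`.
The weight integral only sees the marginals, so the drift condition bounds it by
`1 + β(V(x)/8 + K_V) + β(V(y)/8 + K_V) ≤ (1 + 2βK_V)(1 + βV(x) + βV(y))` uniformly in `π`.
Taking the infimum of `∫ d dπ` over `π` and using the contraction of `d` gives the estimate. -/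

lemma lintegral_ofReal_sqrt_mul_sq_le {Ω : Type*} [MeasurableSpace Ω] (μ : Measure Ω)
    {f g : Ω → ℝ} (hf : AEMeasurable f μ) (hg : AEMeasurable g μ)
    (hf0 : ∀ a, 0 ≤ f a) (hg0 : ∀ a, 0 ≤ g a) :
    (∫⁻ a, ENNReal.ofReal √(f a * g a) ∂μ) ^ 2
      ≤ (∫⁻ a, ENNReal.ofReal (f a) ∂μ) * ∫⁻ a, ENNReal.ofReal (g a) ∂μ := by
  have hsqrt : ∀ a, ENNReal.ofReal √(f a * g a)
      = ENNReal.ofReal (f a) ^ (1 / 2 : ℝ) * ENNReal.ofReal (g a) ^ (1 / 2 : ℝ) := by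
    intro a
    rw [Real.sqrt_mul (hf0 a), ENNReal.ofReal_mul (Real.sqrt_nonneg _), Real.sqrt_eq_rpow,
      Real.sqrt_eq_rpow, ENNReal.ofReal_rpow_of_nonneg (hf0 a) (by norm_num),
      ENNReal.ofReal_rpow_of_nonneg (hg0 a) (by norm_num)]
  have hsq : ∀ c : ℝ≥0∞, (c ^ (1 / 2 : ℝ)) ^ (2 : ℝ) = c := fun c => by
    rw [← ENNReal.rpow_mul]; norm_num
  have hCS := ENNReal.lintegral_mul_le_Lp_mul_Lq μ Real.HolderConjugate.two_two
    (hf.ennreal_ofReal.pow_const (1 / 2 : ℝ)) (hg.ennreal_ofReal.pow_const (1 / 2 : ℝ))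
  simp only [Pi.mul_apply, hsq] at hCS
  calc (∫⁻ a, ENNReal.ofReal √(f a * g a) ∂μ) ^ 2
      ≤ ((∫⁻ a, ENNReal.ofReal (f a) ∂μ) ^ (1 / 2 : ℝ) *
          (∫⁻ a, ENNReal.ofReal (g a) ∂μ) ^ (1 / 2 : ℝ)) ^ 2 := by
        simp only [hsqrt]; gcongr
    _ = _ := by
        rw [mul_pow, ← ENNReal.rpow_natCast, ← ENNReal.rpow_natCast, Nat.cast_ofNat, hsq,
          hsq]

namespace IsCoupling

variable {α β : Type*} [MeasurableSpace α] [MeasurableSpace β]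
  {π : Measure (α × β)} {μ : Measure α} {ν : Measure β}

lemma isProbabilityMeasure [IsProbabilityMeasure μ] (h : IsCoupling π μ ν) :
    IsProbabilityMeasure π := by
  have : IsProbabilityMeasure (π.map Prod.fst) := h.1 ▸ inferInstance
  exact (Measure.isProbabilityMeasure_map_iff measurable_fst.aemeasurable).1 this

lemma integrable_comp_fst (h : IsCoupling π μ ν) {f : α → ℝ} (hf : Integrable f μ) :
    Integrable (fun p => f p.1) π :=
  Integrable.comp_measurable (h.1 ▸ hf) measurable_fst

lemma integrable_comp_snd (h : IsCoupling π μ ν) {f : β → ℝ} (hf : Integrable f ν) :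
    Integrable (fun p => f p.2) π :=
  Integrable.comp_measurable (h.2 ▸ hf) measurable_snd

lemma integral_comp_fst (h : IsCoupling π μ ν) {f : α → ℝ}
    (hf : AEStronglyMeasurable f μ) :
    ∫ p, f p.1 ∂π = ∫ a, f a ∂μ := by
  rw [← h.1, integral_map measurable_fst.aemeasurable (h.1 ▸ hf)]

lemma integral_comp_snd (h : IsCoupling π μ ν) {f : β → ℝ}
    (hf : AEStronglyMeasurable f ν) :
    ∫ p, f p.2 ∂π = ∫ b, f b ∂ν := by
  rw [← h.2, integral_map measurable_snd.aemeasurable (h.2 ▸ hf)]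

end IsCoupling

section

variable {α : Type*} [MeasurableSpace α] {μ ν : Measure α}

lemma liftDist_le_lintegral (d : α → α → ℝ) {π : Measure (α × α)}
    (h : IsCoupling π μ ν) :
    liftDist d μ ν ≤ ∫⁻ p, ENNReal.ofReal (d p.1 p.2) ∂π :=
  sInf_le ⟨π, h, rfl⟩

lemma liftDist_sqrt_mul_sq_le {d w : α → α → ℝ}
    (hd : Measurable (Function.uncurry d)) (hw : Measurable (Function.uncurry w))
    (hd0 : ∀ a b, 0 ≤ d a b) (hw0 : ∀ a b, 0 ≤ w a b) {C : ℝ≥0∞} (hC0 : C ≠ 0)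
    (hC : C ≠ ⊤) (hwC : ∀ π : Measure (α × α), IsCoupling π μ ν →
      ∫⁻ p, ENNReal.ofReal (w p.1 p.2) ∂π ≤ C) :
    liftDist (fun a b => √(d a b * w a b)) μ ν ^ 2 ≤ liftDist d μ ν * C := by
  rw [← ENNReal.div_le_iff hC0 hC]
  refine le_sInf ?_
  rintro _ ⟨π, hπ, rfl⟩
  rw [ENNReal.div_le_iff hC0 hC]
  calc liftDist (fun a b => √(d a b * w a b)) μ ν ^ 2
      ≤ (∫⁻ p, ENNReal.ofReal √(d p.1 p.2 * w p.1 p.2) ∂π) ^ 2 := by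
        gcongr; exact liftDist_le_lintegral _ hπ
    _ ≤ (∫⁻ p, ENNReal.ofReal (d p.1 p.2) ∂π) *
          ∫⁻ p, ENNReal.ofReal (w p.1 p.2) ∂π :=
        lintegral_ofReal_sqrt_mul_sq_le π hd.aemeasurable hw.aemeasurable
          (fun p => hd0 p.1 p.2) (fun p => hw0 p.1 p.2)
    _ ≤ (∫⁻ p, ENNReal.ofReal (d p.1 p.2) ∂π) * C := by gcongr; exact hwC π hπ

end

lemma IsCoupling.lintegral_weight_eq {α : Type*} [MeasurableSpace α] {π : Measure (α × α)}
    {μ ν : Measure α} [IsProbabilityMeasure μ] (h : IsCoupling π μ ν) {V : α → ℝ}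
    (hV0 : ∀ a, 0 ≤ V a) (hVμ : Integrable V μ) (hVν : Integrable V ν) {β : ℝ}
    (hβ : 0 ≤ β) :
    ∫⁻ p, ENNReal.ofReal (1 + β * V p.1 + β * V p.2) ∂π
      = ENNReal.ofReal (1 + β * ∫ a, V a ∂μ + β * ∫ a, V a ∂ν) := by
  have := h.isProbabilityMeasure
  have hV1 := (h.integrable_comp_fst hVμ).const_mul β
  have hV2 := (h.integrable_comp_snd hVν).const_mul β
  have hV01 : Integrable (fun p => 1 + β * V p.1) π := (integrable_const 1).add hV1
  have hW : Integrable (fun p => 1 + β * V p.1 + β * V p.2) π := hV01.add hV2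
  rw [← ofReal_integral_eq_lintegral_ofReal hW
      (Eventually.of_forall fun p => by have := hV0 p.1; have := hV0 p.2; positivity),
    integral_add hV01 hV2, integral_add (integrable_const 1) hV1,
    integral_const_mul, integral_const_mul, h.integral_comp_fst hVμ.1,
    h.integral_comp_snd hVν.1, integral_const, probReal_univ, one_smul]

lemma lintegral_weight_le_of_drift {X : Type*} [MeasurableSpace X] (Q : Kernel X X)
    [IsMarkovKernel Q] {V : X → ℝ} (hV0 : ∀ x, 0 ≤ V x) (hVint : ∀ x, Integrable V (Q x))
    {γ K : ℝ} (hγ : γ ≤ 1) (hK : 0 ≤ K) (hQV : ∀ x, ∫ y, V y ∂(Q x) ≤ γ * V x + K)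
    {β : ℝ} (hβ : 0 ≤ β) {x y : X} {π : Measure (X × X)}
    (hπ : IsCoupling π (Q x) (Q y)) :
    ∫⁻ p, ENNReal.ofReal (1 + β * V p.1 + β * V p.2) ∂π
      ≤ ENNReal.ofReal ((1 + 2 * β * K) * (1 + β * V x + β * V y)) := by
  rw [hπ.lintegral_weight_eq hV0 (hVint x) (hVint y) hβ]
  refine ENNReal.ofReal_le_ofReal ?_
  have hx := mul_le_mul_of_nonneg_left (hQV x) hβ
  have hy := mul_le_mul_of_nonneg_left (hQV y) hβ
  nlinarith [mul_nonneg hβ (hV0 x), mul_nonneg hβ (hV0 y),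
    mul_le_mul_of_nonneg_right hγ (mul_nonneg hβ (hV0 x)),
    mul_le_mul_of_nonneg_right hγ (mul_nonneg hβ (hV0 y)),
    mul_nonneg (mul_nonneg hβ hK) (mul_nonneg hβ (hV0 x)),
    mul_nonneg (mul_nonneg hβ hK) (mul_nonneg hβ (hV0 y))]

lemma liftDist_weighted_sq_le {X : Type*} [MeasurableSpace X] (Q : Kernel X X)
    [IsMarkovKernel Q] {d : X → X → ℝ} (hd : Measurable fun p : X × X => d p.1 p.2)
    (hd0 : ∀ x y, 0 ≤ d x y) {V : X → ℝ} (hV : Measurable V) (hV0 : ∀ x, 0 ≤ V x)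
    (hVint : ∀ x, Integrable V (Q x)) {γ K : ℝ} (hγ : γ ≤ 1) (hK : 0 ≤ K)
    (hQV : ∀ x, ∫ y, V y ∂(Q x) ≤ γ * V x + K) {β : ℝ} (hβ : 0 ≤ β) {α : ℝ}
    {x y : X}
    (hcontract : liftDist d (Q x) (Q y) ≤ ENNReal.ofReal (α * d x y)) :
    liftDist (fun a b => √(d a b * (1 + β * V a + β * V b))) (Q x) (Q y) ^ 2
      ≤ ENNReal.ofReal (α * (1 + 2 * β * K) * (d x y * (1 + β * V x + β * V y))) := by
  have hW0 : ∀ a b, 0 ≤ 1 + β * V a + β * V b := fun a b => by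
    have := hV0 a; have := hV0 b; positivity
  set C := (1 + 2 * β * K) * (1 + β * V x + β * V y) with hC_def
  have hC : 0 < C := by have := hV0 x; have := hV0 y; positivity
  calc _ ≤ liftDist d (Q x) (Q y) * ENNReal.ofReal C :=
        liftDist_sqrt_mul_sq_le hd (by fun_prop) hd0 hW0 (ENNReal.ofReal_pos.2 hC).ne'
          ENNReal.ofReal_ne_top
          fun π hπ => lintegral_weight_le_of_drift Q hV0 hVint hγ hK hQV hβ hπ
    _ ≤ ENNReal.ofReal (α * d x y) * ENNReal.ofReal C := by gcongr
    _ = _ := by rw [← ENNReal.ofReal_mul' hC.le, hC_def]; ring_nf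

theorem stmt_19_general {X : Type*} [TopologicalSpace X] [PolishSpace X]
    [MeasurableSpace X] [BorelSpace X]
    (Q : Kernel X X) [IsMarkovKernel Q]
    (d : X → X → ℝ)
    (hd_lsc : LowerSemicontinuous (fun p : X × X => d p.1 p.2))
    (hd_nonneg : ∀ x y, 0 ≤ d x y)
    (α : ℝ)
    (hcontract : ∀ x y, d x y < 1 →
      liftDist d (Q x) (Q y) ≤ ENNReal.ofReal (α * d x y))
    (V : X → ℝ) (hVcont : Continuous V) (hVnonneg : ∀ x, 0 ≤ V x)
    (hVint : ∀ x, Integrable V (Q x))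
    (K_V : ℝ) (hK_V : 0 < K_V)
    (hQV : ∀ x, ∫ y, V y ∂(Q x) ≤ (1 / 8) * V x + K_V) :
    (∀ β : ℝ, 0 < β → ∀ x y : X, d x y < 1 →
      (liftDist (fun a b => Real.sqrt (d a b * (1 + β * V a + β * V b))) (Q x) (Q y)) ^ 2
        ≤ ENNReal.ofReal
            (α * (1 + 2 * β * K_V) * (d x y * (1 + β * V x + β * V y)))) ∧
    (∀ α₁ : ℝ, α < α₁ → α₁ < 1 → ∀ β : ℝ, 0 < β → α * (1 + 2 * β * K_V) ≤ α₁ →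
      ∀ x y : X, d x y < 1 →
      (liftDist (fun a b => Real.sqrt (d a b * (1 + β * V a + β * V b))) (Q x) (Q y)) ^ 2
        ≤ ENNReal.ofReal (α₁ * (d x y * (1 + β * V x + β * V y)))) := by
  have close : ∀ β : ℝ, 0 < β → ∀ x y : X, d x y < 1 →
      liftDist (fun a b => √(d a b * (1 + β * V a + β * V b))) (Q x) (Q y) ^ 2
        ≤ ENNReal.ofReal (α * (1 + 2 * β * K_V) * (d x y * (1 + β * V x + β * V y))) :=
    fun β hβ x y hxy => liftDist_weighted_sq_le Q hd_lsc.measurable hd_nonneg hVcont.measurable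
      hVnonneg hVint (by norm_num) hK_V.le hQV hβ.le (hcontract x y hxy)
  refine ⟨close, fun α₁ _ _ β hβ hsmall x y hxy => (close β hβ x y hxy).trans ?_⟩
  have hW0 : 0 ≤ 1 + β * V x + β * V y := by
    have := hVnonneg x; have := hVnonneg y; positivity
  exact ENNReal.ofReal_le_ofReal <|
    mul_le_mul_of_nonneg_right hsmall (mul_nonneg (hd_nonneg x y) hW0)

/-- **"Close to each other" estimate in the weak Harris theorem.** If `d` is contracting
for `Q` with constant `α < 1` and `QV ≤ V/8 + K_V`, then for `d(x,y) < 1` the weighted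
distance `d̃_β(x,y) = √(d(x,y)(1 + βV(x) + βV(y)))` satisfies
`d̃_β(Q(x,·),Q(y,·))² ≤ α(1 + 2βK_V) d̃_β(x,y)²`; in particular for `α₁ ∈ (α,1)` and `β`
small enough that `α(1+2βK_V) ≤ α₁`, one gets contraction by the factor `α₁`. -/
theorem stmt_19 {X : Type*} [TopologicalSpace X] [PolishSpace X]
    [MeasurableSpace X] [BorelSpace X]
    (Q : Kernel X X) [IsMarkovKernel Q]
    (d : X → X → ℝ)
    (hd_symm : ∀ x y, d x y = d y x)
    (hd_eq_zero : ∀ x y, d x y = 0 ↔ x = y)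
    (hd_lsc : LowerSemicontinuous (fun p : X × X => d p.1 p.2))
    (hd_nonneg : ∀ x y, 0 ≤ d x y) (hd_le_one : ∀ x y, d x y ≤ 1)
    (α : ℝ) (hα : α < 1)
    (hcontract : ∀ x y, d x y < 1 →
      liftDist d (Q x) (Q y) ≤ ENNReal.ofReal (α * d x y))
    (V : X → ℝ) (hVcont : Continuous V) (hVnonneg : ∀ x, 0 ≤ V x)
    (hVint : ∀ x, Integrable V (Q x))
    (K_V : ℝ) (hK_V : 0 < K_V)
    (hQV : ∀ x, ∫ y, V y ∂(Q x) ≤ (1 / 8) * V x + K_V) :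
    (∀ β : ℝ, 0 < β → ∀ x y : X, d x y < 1 →
      (liftDist (fun a b => Real.sqrt (d a b * (1 + β * V a + β * V b))) (Q x) (Q y)) ^ 2
        ≤ ENNReal.ofReal
            (α * (1 + 2 * β * K_V) * (d x y * (1 + β * V x + β * V y)))) ∧
    (∀ α₁ : ℝ, α < α₁ → α₁ < 1 → ∀ β : ℝ, 0 < β → α * (1 + 2 * β * K_V) ≤ α₁ →
      ∀ x y : X, d x y < 1 →
      (liftDist (fun a b => Real.sqrt (d a b * (1 + β * V a + β * V b))) (Q x) (Q y)) ^ 2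
        ≤ ENNReal.ofReal (α₁ * (d x y * (1 + β * V x + β * V y)))) :=
  stmt_19_general Q d hd_lsc hd_nonneg α hcontract V hVcont hVnonneg hVint K_V hK_V hQV
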